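/- Let S be a commutative semiring and X, Y S-semimodules. If X is finitely generated and projective and Y is uniformly finitely presented (there exist n ∈ ℕ and a surjective k-uniform S-linear map g : S^n → Y whose kernel submodule {x | g(x) = 0} is finitely generated), then the canonical S-linear map X* ⊗_S Y* → (X ⊗_S Y)*, f ⊗ g ↦ (x ⊗ y ↦ f(x)·g(y)), is bijective. -/
import Mathlib


/-!
STATEMENT 3: Over a commutative semiring `S`, if `X` is a finitely generated
projective `S`-semimodule and `Y` is a uniformly finitely presented
`S`-semimodule, then the canonical map
`X* ⊗[S] Y* → (X ⊗[S] Y)*`, `f ⊗ g ↦ (x ⊗ y ↦ f x · g y)`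
(in Mathlib: `TensorProduct.dualDistrib`) is bijective.
-/

open TensorProduct

section Aux

variable (S : Type*) [CommSemiring S]
variable (Y : Type*) [AddCommMonoid Y] [Module S Y]

noncomputable def myInv (n : ℕ) (h : Module.Dual S ((Fin n → S) ⊗[S] Y)) :
    Module.Dual S (Fin n → S) ⊗[S] Module.Dual S Y :=
  ∑ j : Fin n, (LinearMap.proj j : (Fin n → S) →ₗ[S] S) ⊗ₜ[S]
    (h ∘ₗ TensorProduct.mk S (Fin n → S) Y (Pi.single j 1))

lemma single_eq_ite (n : ℕ) (j : Fin n) :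
    (Pi.single j 1 : Fin n → S) = fun i => if j = i then (1 : S) else 0 := by
  funext i
  simp [Pi.single_apply, eq_comm]

lemma myInv_add (n : ℕ) (h₁ h₂ : Module.Dual S ((Fin n → S) ⊗[S] Y)) :
    myInv S Y n (h₁ + h₂) = myInv S Y n h₁ + myInv S Y n h₂ := by
  rw [myInv, myInv, myInv, ← Finset.sum_add_distrib]
  refine Finset.sum_congr rfl fun j _ => ?_
  rw [LinearMap.add_comp, TensorProduct.tmul_add]

lemma myInv_right (n : ℕ) (h : Module.Dual S ((Fin n → S) ⊗[S] Y)) :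
    TensorProduct.dualDistrib S (Fin n → S) Y (myInv S Y n h) = h := by
  apply TensorProduct.ext'
  intro x y
  rw [myInv, map_sum]
  simp only [LinearMap.sum_apply, TensorProduct.dualDistrib_apply, LinearMap.comp_apply,
    TensorProduct.mk_apply, LinearMap.proj_apply]
  have hx : x = ∑ j : Fin n, x j • (Pi.single j 1 : Fin n → S) := by
    ext i
    rw [Finset.sum_apply]
    simp [Pi.single_apply]
  conv_rhs => rw [hx, TensorProduct.sum_tmul]
  rw [map_sum]
  refine Finset.sum_congr rfl fun j _ => ?_
  rw [← TensorProduct.smul_tmul', map_smul, smul_eq_mul]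

lemma myInv_left (n : ℕ) (t : Module.Dual S (Fin n → S) ⊗[S] Module.Dual S Y) :
    myInv S Y n (TensorProduct.dualDistrib S (Fin n → S) Y t) = t := by
  induction t using TensorProduct.induction_on with
  | zero => simp [myInv]
  | add a b ha hb => rw [map_add, myInv_add, ha, hb]
  | tmul f g =>
      have hf : f = ∑ j : Fin n, f (Pi.single j 1) • (LinearMap.proj j : (Fin n → S) →ₗ[S] S) := by
        refine LinearMap.ext fun x => ?_
        rw [LinearMap.pi_apply_eq_sum_univ f x]
        simp only [LinearMap.sum_apply, LinearMap.smul_apply, LinearMap.proj_apply, smul_eq_mul]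
        refine Finset.sum_congr rfl fun j _ => ?_
        rw [mul_comm, single_eq_ite]
      rw [myInv]
      conv_rhs => rw [hf, TensorProduct.sum_tmul]
      refine Finset.sum_congr rfl fun j _ => ?_
      rw [TensorProduct.smul_tmul]
      exact congrArg (LinearMap.proj j ⊗ₜ[S] ·) (LinearMap.ext fun y => by simp)

lemma free_bij (n : ℕ) : Function.Bijective (TensorProduct.dualDistrib S (Fin n → S) Y) :=
  ⟨Function.LeftInverse.injective (myInv_left S Y n),
   Function.RightInverse.surjective (g := myInv S Y n) (myInv_right S Y n)⟩

variable {M N : Type*} [AddCommMonoid M] [Module S M] [AddCommMonoid N] [Module S N]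

lemma dualDistrib_naturality (φ : M →ₗ[S] N) :
    (TensorProduct.dualDistrib S M Y) ∘ₗ
        (TensorProduct.map φ.dualMap (LinearMap.id : Module.Dual S Y →ₗ[S] Module.Dual S Y)) =
      (TensorProduct.map φ (LinearMap.id : Y →ₗ[S] Y)).dualMap ∘ₗ
        TensorProduct.dualDistrib S N Y := by
  apply TensorProduct.ext'
  intro f g
  apply TensorProduct.ext'
  intro x y
  simp

end Aux

theorem dualDistrib_bijective_of_fg_projective_of_ufp
    (S : Type*) [CommSemiring S]
    (X : Type*) [AddCommMonoid X] [Module S X]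
    (Y : Type*) [AddCommMonoid Y] [Module S Y]
    (hXfg : Module.Finite S X) (hXproj : Module.Projective S X)
    (hY : ∃ (n : ℕ) (g : (Fin n → S) →ₗ[S] Y),
      Function.Surjective g ∧
      (∀ x y : Fin n → S, g x = g y →
        ∃ k k' : Fin n → S, g k = 0 ∧ g k' = 0 ∧ x + k = y + k') ∧
      (LinearMap.ker g).FG) :
    Function.Bijective (TensorProduct.dualDistrib S X Y) := by
  obtain ⟨n, p, i, hpsurj, hiinj, hpi⟩ := Module.Finite.exists_comp_eq_id_of_projective S X
  have hF := free_bij S Y n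
  -- naturality for p : (Fin n → S) →ₗ X and i : X →ₗ (Fin n → S)
  have natp := dualDistrib_naturality S Y (M := Fin n → S) (N := X) p
  have nati := dualDistrib_naturality S Y (M := X) (N := Fin n → S) i
  have hid : (TensorProduct.map i.dualMap
        (LinearMap.id : Module.Dual S Y →ₗ[S] Module.Dual S Y)) ∘ₗ
      (TensorProduct.map p.dualMap LinearMap.id) =
      LinearMap.id := by
    rw [← TensorProduct.map_comp]
    have hdd : i.dualMap ∘ₗ p.dualMap =
        (LinearMap.id : Module.Dual S X →ₗ[S] Module.Dual S X) := by
      refine LinearMap.ext fun f => LinearMap.ext fun x => ?_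
      have hx := congrFun (congrArg DFunLike.coe hpi) x
      simp only [LinearMap.comp_apply, LinearMap.id_apply] at hx ⊢
      simp [hx]
    rw [hdd]
    refine TensorProduct.ext' fun f g => ?_
    simp
  constructor
  · intro t t' h
    have h1 : TensorProduct.dualDistrib S (Fin n → S) Y
        (TensorProduct.map p.dualMap LinearMap.id t) =
        TensorProduct.dualDistrib S (Fin n → S) Y
        (TensorProduct.map p.dualMap LinearMap.id t') := by
      have e1 := congrFun (congrArg DFunLike.coe natp) t
      have e2 := congrFun (congrArg DFunLike.coe natp) t'
      simp only [LinearMap.comp_apply] at e1 e2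
      rw [e1, e2, h]
    have h2 := hF.injective h1
    have h3 := congrArg (TensorProduct.map i.dualMap
      (LinearMap.id : Module.Dual S Y →ₗ[S] Module.Dual S Y)) h2
    have h4 := congrFun (congrArg DFunLike.coe hid) t
    have h5 := congrFun (congrArg DFunLike.coe hid) t'
    simp only [LinearMap.comp_apply, LinearMap.id_apply] at h4 h5
    rw [h4, h5] at h3
    exact h3
  · intro h
    obtain ⟨u, hu⟩ := hF.surjective ((TensorProduct.map p
      (LinearMap.id : Y →ₗ[S] Y)).dualMap h)
    refine ⟨TensorProduct.map i.dualMap LinearMap.id u, ?_⟩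
    have e := congrFun (congrArg DFunLike.coe nati) u
    simp only [LinearMap.comp_apply] at e
    rw [e, hu]
    have hmm : TensorProduct.map p (LinearMap.id : Y →ₗ[S] Y) ∘ₗ
        TensorProduct.map i LinearMap.id = LinearMap.id := by
      rw [← TensorProduct.map_comp, hpi]
      refine TensorProduct.ext' fun x y => ?_
      simp
    refine LinearMap.ext fun z => ?_
    have hz := congrFun (congrArg DFunLike.coe hmm) z
    simp only [LinearMap.comp_apply, LinearMap.id_apply] at hz
    simp only [LinearMap.dualMap_apply, LinearMap.comp_apply, hz]
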